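/- In a renewal where one node transmits after listening for duration l, the probability that a fixed non-transmitting node (among N i.i.d. Exp(λ) sleepers) receives the message is P(Y=1) = (1 − e^{−λl})(N−1)/N, and the probability it is the transmitter is P(Y=0) = 1/N; consequently P(Y=2) = 1 − 1/N − (1−e^{−λl})(N−1)/N = e^{−λl}(N−1)/N. -/

import Mathlib

/-!
Let `M` be the minimum of the other `N - 1` clocks. By independence, `M ~ Exp((N - 1) λ)` and `M`
is independent of `X j`; conditioning on `M` and using that `X j` is memoryless gives
`P(M + t < X j) = (N - 1) / N * e^{-λ t}` for `t ≥ 0`. Node `j` transmits iff `X j ≤ M`,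
receives iff `M < X j < M + l`, and stays asleep iff `M + l ≤ X j`.
-/

open MeasureTheory Set Real ProbabilityTheory

lemma iInf_eq_min_iInf_ne {ι : Type*} [Finite ι] (f : ι → ℝ) (j : ι)
    [Nonempty {i // i ≠ j}] :
    ⨅ i, f i = min (f j) (⨅ i : {i // i ≠ j}, f i) := by
  have : Nonempty ι := ⟨j⟩
  have hbdd := (Set.finite_range f).bddBelow
  have hbdd_ne := (Set.finite_range fun i : {i // i ≠ j} => f i).bddBelow
  refine le_antisymm (le_min (ciInf_le hbdd j) (le_ciInf fun i => ciInf_le hbdd i.1))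
    (le_ciInf fun i => ?_)
  by_cases hij : i = j
  · exact hij ▸ min_le_left _ _
  · exact (min_le_right _ _).trans (ciInf_le hbdd_ne ⟨i, hij⟩)

namespace ProbabilityTheory

instance (r : ℝ) : NullSingletonClass (expMeasure r) := nullSingletonClass_withDensity _

lemma expMeasure_Ioi {r : ℝ} (hr : 0 < r) (x : ℝ) :
    expMeasure r (Ioi x) = ENNReal.ofReal (rexp (-(r * max x 0))) := by
  have := isProbabilityMeasure_expMeasure hr
  rw [← compl_Iic, prob_compl_eq_one_sub measurableSet_Iic, ← ofReal_cdf, cdf_expMeasure_eq hr]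
  rcases le_or_gt 0 x with hx | hx
  · have hle : ENNReal.ofReal (rexp (-(r * x))) ≤ 1 :=
      ENNReal.ofReal_le_one.2 (exp_le_one_iff.2 (by nlinarith))
    rw [if_pos hx, max_eq_left hx, ENNReal.ofReal_sub _ (exp_pos _).le, ENNReal.ofReal_one,
      ENNReal.sub_sub_cancel ENNReal.one_ne_top hle]
  · simp [if_neg hx.not_ge, max_eq_right hx.le]

lemma expMeasure_Ioi_of_nonneg {r : ℝ} (hr : 0 < r) {x : ℝ} (hx : 0 ≤ x) :
    expMeasure r (Ioi x) = ENNReal.ofReal (rexp (-(r * x))) := by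
  rw [expMeasure_Ioi hr, max_eq_left hx]

lemma expMeasure_nsmul_Ici {r : ℝ} (hr : 0 < r) {n : ℕ} (hn : 0 < n) (x : ℝ) :
    expMeasure (n * r) (Ici x) = expMeasure r (Ici x) ^ n := by
  rw [← measure_congr Ioi_ae_eq_Ici, ← measure_congr Ioi_ae_eq_Ici,
    expMeasure_Ioi (by positivity), expMeasure_Ioi hr, ← ENNReal.ofReal_pow (exp_pos _).le,
    ← exp_nat_mul]
  ring_nf

lemma ae_nonneg_expMeasure {r : ℝ} (hr : 0 < r) : ∀ᵐ x ∂expMeasure r, 0 ≤ x := by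
  have := isProbabilityMeasure_expMeasure hr
  refine ae_iff.2 (measure_mono_null (t := Iic 0) (fun x hx => (not_le.1 hx).le) ?_)
  rw [← ofReal_cdf, cdf_expMeasure_eq hr]
  simp

lemma lintegral_exp_neg_mul_expMeasure {b : ℝ} (hb : 0 < b) {c : ℝ} (hc : 0 ≤ c) :
    ∫⁻ x, ENNReal.ofReal (rexp (-(c * x))) ∂expMeasure b = ENNReal.ofReal (b / (b + c)) := by
  have hbc : 0 < b + c := by linarith
  have hmeas (r : ℝ) : Measurable (exponentialPDF r) :=
    (measurable_exponentialPDFReal r).ennreal_ofReal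
  have hdens : exponentialPDF b * (fun x => ENNReal.ofReal (rexp (-(c * x))))
      = fun x => ENNReal.ofReal (b / (b + c)) * exponentialPDF (b + c) x := by
    ext x
    simp only [Pi.mul_apply, exponentialPDF_eq, ← ENNReal.ofReal_mul' (exp_pos _).le,
      ← ENNReal.ofReal_mul (div_pos hb hbc).le]
    split_ifs
    · congr 1
      field_simp
      rw [← exp_add]
      ring_nf
    · simp
  rw [show expMeasure b = volume.withDensity (exponentialPDF b) from rfl,
    lintegral_withDensity_eq_lintegral_mul _ (hmeas b) (by fun_prop), hdens,
    lintegral_const_mul _ (hmeas _), lintegral_exponentialPDF_eq_one hbc, mul_one]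

lemma lintegral_expMeasure_Ioi_add {a b t : ℝ} (ha : 0 < a) (hb : 0 < b) (ht : 0 ≤ t) :
    ∫⁻ v, expMeasure b (Ioi (v + t)) ∂expMeasure a
      = ENNReal.ofReal (a / (a + b) * rexp (-(b * t))) := by
  calc ∫⁻ v, expMeasure b (Ioi (v + t)) ∂expMeasure a
      = ∫⁻ v, ENNReal.ofReal (rexp (-(b * t))) * ENNReal.ofReal (rexp (-(b * v)))
          ∂expMeasure a :=
        lintegral_congr_ae <| (ae_nonneg_expMeasure ha).mono fun v hv => by
          dsimp only
          rw [expMeasure_Ioi_of_nonneg hb (by linarith), ← ENNReal.ofReal_mul (exp_pos _).le,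
            ← exp_add]
          ring_nf
    _ = ENNReal.ofReal (a / (a + b) * rexp (-(b * t))) := by
      rw [lintegral_const_mul _ (by fun_prop), lintegral_exp_neg_mul_expMeasure ha hb.le,
        ← ENNReal.ofReal_mul (exp_pos _).le, mul_comm]

lemma IndepFun.measure_preimage_prodMk {Ω : Type*} [MeasurableSpace Ω] {μ : Measure Ω}
    [IsFiniteMeasure μ] {M Y : Ω → ℝ} (hM : Measurable M) (hY : Measurable Y)
    (hMY : IndepFun M Y μ) {B : Set (ℝ × ℝ)} (hB : MeasurableSet B) :
    μ ((fun ω => (M ω, Y ω)) ⁻¹' B) = (μ.map M).prod (μ.map Y) B := by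
  rw [← Measure.map_apply (hM.prodMk hY) hB,
    (indepFun_iff_map_prod_eq_prod_map_map hM.aemeasurable hY.aemeasurable).1 hMY]

section ExponentialRace

variable {Ω : Type*} [MeasurableSpace Ω] {μ : Measure Ω} [IsProbabilityMeasure μ]
  {M Y : Ω → ℝ} {a b : ℝ} (hM : Measurable M) (hY : Measurable Y) (hMY : IndepFun M Y μ)
  (hMlaw : μ.map M = expMeasure a) (hYlaw : μ.map Y = expMeasure b) (ha : 0 < a) (hb : 0 < b)
include hM hY hMY hMlaw hYlaw ha hb

lemma measure_add_lt_of_indepFun_expMeasure {t : ℝ} (ht : 0 ≤ t) :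
    μ {ω | M ω + t < Y ω} = ENNReal.ofReal (a / (a + b) * rexp (-(b * t))) := by
  have := isProbabilityMeasure_expMeasure hb
  have hB : MeasurableSet {p : ℝ × ℝ | p.1 + t < p.2} :=
    measurableSet_lt (by fun_prop) (by fun_prop)
  change μ ((fun ω => (M ω, Y ω)) ⁻¹' {p | p.1 + t < p.2}) = _
  rw [hMY.measure_preimage_prodMk hM hY hB, hMlaw, hYlaw, Measure.prod_apply hB]
  exact lintegral_expMeasure_Ioi_add ha hb ht

lemma measure_add_le_of_indepFun_expMeasure {t : ℝ} (ht : 0 ≤ t) :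
    μ {ω | M ω + t ≤ Y ω} = ENNReal.ofReal (a / (a + b) * rexp (-(b * t))) := by
  have := isProbabilityMeasure_expMeasure hb
  have hB : MeasurableSet {p : ℝ × ℝ | p.1 + t ≤ p.2} :=
    measurableSet_le (by fun_prop) (by fun_prop)
  change μ ((fun ω => (M ω, Y ω)) ⁻¹' {p | p.1 + t ≤ p.2}) = _
  rw [hMY.measure_preimage_prodMk hM hY hB, hMlaw, hYlaw, Measure.prod_apply hB]
  calc ∫⁻ v, expMeasure b (Ici (v + t)) ∂expMeasure a
      = ∫⁻ v, expMeasure b (Ioi (v + t)) ∂expMeasure a :=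
        lintegral_congr fun v => (measure_congr Ioi_ae_eq_Ici).symm
    _ = _ := lintegral_expMeasure_Ioi_add ha hb ht

lemma measure_le_of_indepFun_expMeasure :
    μ {ω | Y ω ≤ M ω} = ENNReal.ofReal (b / (a + b)) := by
  have hlt := measure_add_lt_of_indepFun_expMeasure hM hY hMY hMlaw hYlaw ha hb le_rfl
  simp only [add_zero, mul_zero, neg_zero, exp_zero, mul_one] at hlt
  have hcompl : {ω | Y ω ≤ M ω} = {ω | M ω < Y ω}ᶜ := by ext; simp
  rw [hcompl, prob_compl_eq_one_sub (measurableSet_lt hM hY), hlt, ← ENNReal.ofReal_one,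
    ← ENNReal.ofReal_sub _ (by positivity)]
  congr 1
  field_simp
  ring

lemma measure_lt_lt_add_of_indepFun_expMeasure {l : ℝ} (hl : 0 < l) :
    μ {ω | M ω < Y ω ∧ Y ω < M ω + l}
      = ENNReal.ofReal (a / (a + b) * (1 - rexp (-(b * l)))) := by
  have hlt := measure_add_lt_of_indepFun_expMeasure hM hY hMY hMlaw hYlaw ha hb le_rfl
  have hle := measure_add_le_of_indepFun_expMeasure hM hY hMY hMlaw hYlaw ha hb hl.le
  simp only [add_zero, mul_zero, neg_zero, exp_zero, mul_one] at hlt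
  have hdiff : {ω | M ω < Y ω ∧ Y ω < M ω + l}
      = {ω | M ω < Y ω} \ {ω | M ω + l ≤ Y ω} := by
    ext; simp
  have hsub : {ω | M ω + l ≤ Y ω} ⊆ {ω | M ω < Y ω} := fun ω hω => by
    simp only [mem_ofPred_eq] at hω ⊢
    linarith
  rw [hdiff, measure_sdiff hsub (measurableSet_le (hM.add_const l) hY).nullMeasurableSet
    (measure_ne_top _ _), hlt, hle, ← ENNReal.ofReal_sub _ (by positivity)]
  ring_nf

end ExponentialRace

variable {Ω : Type*} [MeasurableSpace Ω] {μ : Measure Ω}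

lemma iIndepFun.map_iInf_expMeasure {ι : Type*} [Fintype ι] [Nonempty ι] {X : ι → Ω → ℝ}
    (hmeas : ∀ i, Measurable (X i)) (hind : iIndepFun X μ) {r : ℝ} (hr : 0 < r)
    (hlaw : ∀ i, μ.map (X i) = expMeasure r) :
    μ.map (fun ω => ⨅ i, X i ω) = expMeasure (Fintype.card ι * r) := by
  have hM : Measurable fun ω => ⨅ i, X i ω := Measurable.iInf hmeas
  have := isProbabilityMeasure_expMeasure hr
  have := hind.isProbabilityMeasure
  have := Measure.isProbabilityMeasure_map (μ := μ) hM.aemeasurable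
  refine Measure.ext_of_Ici _ _ fun t => ?_
  have hpre : (fun ω => ⨅ i, X i ω) ⁻¹' Ici t = ⋂ i, X i ⁻¹' Ici t := by
    ext ω
    simp [le_ciInf_iff (Set.finite_range fun i => X i ω).bddBelow]
  rw [Measure.map_apply hM measurableSet_Ici, hpre,
    hind.meas_iInter fun i => ⟨Ici t, measurableSet_Ici, rfl⟩,
    expMeasure_nsmul_Ici hr Fintype.card_pos]
  simp_rw [← Measure.map_apply (hmeas _) measurableSet_Ici, hlaw, Finset.prod_const,
    Finset.card_univ]

lemma iIndepFun.indepFun_iInf_ne {ι : Type*} [Fintype ι] [DecidableEq ι] {X : ι → Ω → ℝ}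
    (hmeas : ∀ i, Measurable (X i)) (hind : iIndepFun X μ) (j : ι) :
    IndepFun (fun ω => ⨅ i : {i // i ≠ j}, X i ω) (X j) μ := by
  have hφ : Measurable fun y : ({j}ᶜ : Finset ι) → ℝ =>
      ⨅ i : {i // i ≠ j}, y ⟨i, by simpa using i.2⟩ :=
    Measurable.iInf fun _ => measurable_pi_apply _
  have hψ : Measurable fun y : ({j} : Finset ι) → ℝ => y ⟨j, by simp⟩ := measurable_pi_apply _
  exact (hind.indepFun_finset {j}ᶜ {j} (by simp) hmeas).comp hφ hψ

end ProbabilityTheory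

open MeasureTheory

theorem stmt_13 {Ω : Type*} [MeasurableSpace Ω] (μ : Measure Ω) [IsProbabilityMeasure μ]
    (N : ℕ) (hN : 2 ≤ N) (r l : ℝ) (hr : 0 < r) (hl : 0 < l)
    (X : Fin N → Ω → ℝ) (hmeas : ∀ i, Measurable (X i))
    (hindep : ProbabilityTheory.iIndepFun X μ)
    (hmap : ∀ i, Measure.map (X i) μ = ProbabilityTheory.expMeasure r)
    (j : Fin N) :
    μ {ω | X j ω = ⨅ i, X i ω} = ENNReal.ofReal (1 / N) ∧
    μ {ω | X j ω ≠ (⨅ i, X i ω) ∧ X j ω < (⨅ i, X i ω) + l}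
      = ENNReal.ofReal ((1 - Real.exp (-(r * l))) * (N - 1) / N) ∧
    μ {ω | X j ω ≠ (⨅ i, X i ω) ∧ ¬ X j ω < (⨅ i, X i ω) + l}
      = ENNReal.ofReal (Real.exp (-(r * l)) * (N - 1) / N) := by
  have hN' : (2 : ℝ) ≤ N := by exact_mod_cast hN
  obtain ⟨i₀, hi₀⟩ := Fintype.exists_ne_of_one_lt_card (by simp; omega) j
  have : Nonempty {i // i ≠ j} := ⟨⟨i₀, hi₀⟩⟩
  set M : Ω → ℝ := fun ω => ⨅ i : {i // i ≠ j}, X i ω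
  have hM : Measurable M := Measurable.iInf fun i => hmeas i
  have hMlaw : μ.map M = expMeasure ((N - 1) * r) := by
    rw [iIndepFun.map_iInf_expMeasure (X := fun i : {i // i ≠ j} => X i) (fun i => hmeas i)
      (hindep.precomp Subtype.val_injective) hr (fun i => hmap i),
      show Fintype.card {i // i ≠ j} = N - 1 by simp, Nat.cast_sub (by omega), Nat.cast_one]
  have hind := hindep.indepFun_iInf_ne hmeas j
  have hrate : (N - 1) * r + r = N * r := by ring
  have hmin := fun ω => iInf_eq_min_iInf_ne (X · ω) j
  refine ⟨?_, ?_, ?_⟩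
  · convert measure_le_of_indepFun_expMeasure hM (hmeas j) hind hMlaw (hmap j)
      (by nlinarith) hr using 2
    · ext ω; simp only [mem_ofPred_eq, hmin]; grind
    · rw [hrate]; field_simp
  · convert measure_lt_lt_add_of_indepFun_expMeasure hM (hmeas j) hind hMlaw (hmap j)
      (by nlinarith) hr hl using 2
    · ext ω; simp only [mem_ofPred_eq, hmin]; grind
    · rw [hrate]; field_simp
  · convert measure_add_le_of_indepFun_expMeasure hM (hmeas j) hind hMlaw (hmap j)
      (by nlinarith) hr hl.le using 2
    · ext ω; simp only [mem_ofPred_eq, hmin]; grind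
    · rw [hrate]; field_simp
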